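/- For every ε > 0 there exists a continuous map G : X → X with sup_{p∈X} ‖G(p) − F(p)‖ < ε and a nonempty compact set Λ contained in the open square (0,1)² with G(Λ) = Λ, such that the restriction of G to Λ is topologically conjugate to the full two-sided shift on three symbols, i.e. there is a homeomorphism φ : Λ → {0,1,2}^ℤ with φ∘G = S∘φ, where S is the shift map S(s)(k) := s(k+1); in particular G is chaotic on Λ. -/

import Mathlib

open Set

/-- The minimal RS flip-flop map. -/
noncomputable def F (p : ℝ × ℝ) : ℝ × ℝ :=
  (p.2 * (1 - p.1) / (p.1 + p.2 - p.1 * p.2),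
   p.1 * (1 - p.2) / (p.1 + p.2 - p.1 * p.2))

/-- The domain X = [0,1]² minus the two corners (0,0) and (1,1). -/
def X : Set (ℝ × ℝ) :=
  (Icc (0:ℝ) 1 ×ˢ Icc (0:ℝ) 1) \ {((0:ℝ), (0:ℝ)), ((1:ℝ), (1:ℝ))}

/-- The Euclidean norm on ℝ². -/
noncomputable def enorm (p : ℝ × ℝ) : ℝ := Real.sqrt (p.1 ^ 2 + p.2 ^ 2)


/-- Base-4 value of a one-sided digit sequence with digits in {0,1,2}. -/
noncomputable def coor (a : ℕ → Fin 3) : ℝ := ∑' k : ℕ, ((a k : ℕ) : ℝ) * (1/4 : ℝ) ^ (k+1)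

lemma geom_summable : Summable (fun k : ℕ => (1/4 : ℝ) ^ (k+1)) := by
  simpa [pow_succ, mul_comm] using
    (summable_geometric_of_lt_one (by norm_num : (0:ℝ) ≤ 1/4) (by norm_num)).mul_left (1/4 : ℝ)

lemma geom_tsum : ∑' k : ℕ, (1/4 : ℝ) ^ (k+1) = 1/3 := by
  have h := tsum_geometric_of_lt_one (by norm_num : (0:ℝ) ≤ 1/4) (by norm_num : (1/4:ℝ) < 1)
  calc ∑' k : ℕ, (1/4 : ℝ) ^ (k+1) = ∑' k : ℕ, (1/4 : ℝ) * (1/4)^k := by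
        refine tsum_congr fun k => ?_; ring
    _ = (1/4 : ℝ) * ∑' k : ℕ, (1/4 : ℝ)^k := tsum_mul_left
    _ = 1/3 := by rw [h]; norm_num

lemma digit_le (d : Fin 3) : ((d : ℕ) : ℝ) ≤ 2 := by
  have := d.isLt; exact_mod_cast Nat.lt_succ_iff.mp this

lemma digit_nonneg (d : Fin 3) : (0:ℝ) ≤ ((d : ℕ) : ℝ) := by positivity

lemma coor_term_le (a : ℕ → Fin 3) (k : ℕ) :
    ((a k : ℕ) : ℝ) * (1/4 : ℝ) ^ (k+1) ≤ 2 * (1/4 : ℝ) ^ (k+1) := by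
  have := digit_le (a k); nlinarith [pow_pos (by norm_num : (0:ℝ) < 1/4) (k+1)]

lemma coor_term_nonneg (a : ℕ → Fin 3) (k : ℕ) :
    0 ≤ ((a k : ℕ) : ℝ) * (1/4 : ℝ) ^ (k+1) := by positivity

lemma coor_summable (a : ℕ → Fin 3) :
    Summable (fun k : ℕ => ((a k : ℕ) : ℝ) * (1/4 : ℝ) ^ (k+1)) := by
  refine Summable.of_nonneg_of_le (coor_term_nonneg a) (coor_term_le a) ?_
  exact geom_summable.mul_left 2

lemma coor_nonneg (a : ℕ → Fin 3) : 0 ≤ coor a :=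
  tsum_nonneg (coor_term_nonneg a)

lemma coor_le (a : ℕ → Fin 3) : coor a ≤ 2/3 := by
  have h := (coor_summable a).tsum_le_tsum (coor_term_le a) (geom_summable.mul_left 2)
  calc coor a ≤ ∑' k : ℕ, 2 * (1/4 : ℝ)^(k+1) := h
    _ = 2 * ∑' k : ℕ, (1/4 : ℝ)^(k+1) := tsum_mul_left
    _ = 2/3 := by rw [geom_tsum]; norm_num

lemma coor_cons (a : ℕ → Fin 3) :
    coor a = ((a 0 : ℕ) : ℝ) / 4 + coor (fun k => a (k+1)) / 4 := by
  have h := Summable.tsum_eq_zero_add (coor_summable a)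
  have htail : ∑' k : ℕ, ((a (k+1) : ℕ) : ℝ) * (1/4 : ℝ) ^ (k+1+1)
      = coor (fun k => a (k+1)) / 4 := by
    calc ∑' k : ℕ, ((a (k+1) : ℕ) : ℝ) * (1/4 : ℝ) ^ (k+1+1)
        = ∑' k : ℕ, (((a (k+1) : ℕ) : ℝ) * (1/4 : ℝ) ^ (k+1)) * (1/4) := by
          refine tsum_congr fun k => ?_; ring
      _ = (∑' k : ℕ, ((a (k+1) : ℕ) : ℝ) * (1/4 : ℝ) ^ (k+1)) * (1/4) := tsum_mul_right
      _ = coor (fun k => a (k+1)) / 4 := by rw [coor]; ring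
  rw [coor, h, htail]; ring

/-- Strict monotonicity at the first differing digit. -/
lemma coor_lt_coor (a b : ℕ → Fin 3) (n : ℕ) (hlt : ∀ k < n, a k = b k)
    (hn : (a n : ℕ) < (b n : ℕ)) : coor a < coor b := by
  set f : ℕ → ℝ := fun k => ((b k : ℕ) : ℝ) * (1/4 : ℝ)^(k+1) - ((a k : ℕ) : ℝ) * (1/4 : ℝ)^(k+1)
    with hf
  have hsf : Summable f := (coor_summable b).sub (coor_summable a)
  have hdiff : coor b - coor a = ∑' k, f k := (Summable.tsum_sub (coor_summable b) (coor_summable a)).symm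
  have hsplit := Summable.sum_add_tsum_nat_add (n+1) hsf
  -- head sum equals f n
  have hhead : ∑ i ∈ Finset.range (n+1), f i = f n := by
    rw [Finset.sum_range_succ]
    have : ∑ i ∈ Finset.range n, f i = 0 := by
      refine Finset.sum_eq_zero fun i hi => ?_
      have := hlt i (Finset.mem_range.mp hi)
      simp [hf, this]
    rw [this, zero_add]
  have hpow : (0:ℝ) < (1/4 : ℝ)^(n+1) := pow_pos (by norm_num) _
  have hfn : (1/4 : ℝ)^(n+1) ≤ f n := by
    have h1 : ((a n : ℕ) : ℝ) + 1 ≤ ((b n : ℕ) : ℝ) := by exact_mod_cast hn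
    have : f n = (((b n : ℕ) : ℝ) - ((a n : ℕ) : ℝ)) * (1/4:ℝ)^(n+1) := by rw [hf]; ring
    nlinarith
  -- tail lower bound
  have hsg : Summable (fun i : ℕ => (-2 * (1/4:ℝ)^(n+2)) * (1/4:ℝ)^i) :=
    (summable_geometric_of_lt_one (by norm_num) (by norm_num)).mul_left _
  have hstail : Summable (fun i : ℕ => f (i + (n+1))) := by
    rwa [summable_nat_add_iff]
  have htail_ge : (-2/3) * (1/4:ℝ)^(n+1) ≤ ∑' i : ℕ, f (i + (n+1)) := by
    have hle : ∀ i : ℕ, (-2 * (1/4:ℝ)^(n+2)) * (1/4:ℝ)^i ≤ f (i + (n+1)) := by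
      intro i
      have e : (1/4:ℝ)^(i + (n+1) + 1) = (1/4:ℝ)^(n+2) * (1/4:ℝ)^i := by
        rw [← pow_add]; ring_nf
      have hb := digit_nonneg (b (i + (n+1)))
      have ha := digit_le (a (i + (n+1)))
      have hp : (0:ℝ) < (1/4:ℝ)^(i + (n+1) + 1) := pow_pos (by norm_num) _
      have : f (i + (n+1)) ≥ -2 * (1/4:ℝ)^(i + (n+1) + 1) := by
        rw [hf]; dsimp only; nlinarith
      calc (-2 * (1/4:ℝ)^(n+2)) * (1/4:ℝ)^i = -2 * (1/4:ℝ)^(i + (n+1) + 1) := by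
            rw [e]; ring
        _ ≤ f (i + (n+1)) := this
    have := hsg.tsum_le_tsum hle hstail
    have hgeo : ∑' i : ℕ, (-2 * (1/4:ℝ)^(n+2)) * (1/4:ℝ)^i
        = (-2 * (1/4:ℝ)^(n+2)) * (4/3) := by
      rw [tsum_mul_left, tsum_geometric_of_lt_one (by norm_num) (by norm_num)]; norm_num
    rw [hgeo] at this
    calc (-2/3) * (1/4:ℝ)^(n+1) = (-2 * (1/4:ℝ)^(n+2)) * (4/3) := by ring
      _ ≤ _ := this
  have : 0 < coor b - coor a := by
    rw [hdiff, ← hsplit, hhead]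
    have hadd := add_le_add hfn htail_ge
    clear_value f
    linarith
  linarith

lemma coor_injective : Function.Injective coor := by
  intro a b hab
  by_contra hne
  have hex : ∃ n, a n ≠ b n := by
    by_contra h
    push_neg at h
    exact hne (funext h)
  set n := Nat.find hex with hn
  have hne_n : a n ≠ b n := Nat.find_spec hex
  have hlt : ∀ k < n, a k = b k := fun k hk => by
    by_contra h; exact absurd hk (not_lt.mpr (Nat.find_le h))
  have hval : (a n : ℕ) ≠ (b n : ℕ) := fun h => hne_n (Fin.ext h)
  rcases lt_or_gt_of_ne hval with h | h
  · exact absurd hab (ne_of_lt (coor_lt_coor a b n hlt h))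
  · exact absurd hab.symm (ne_of_lt (coor_lt_coor b a n (fun k hk => (hlt k hk).symm) h))

lemma coor_continuous : Continuous coor := by
  refine continuous_tsum (u := fun k : ℕ => 2 * (1/4:ℝ)^(k+1)) (fun k => ?_)
    (geom_summable.mul_left 2) (fun k x => ?_)
  · exact ((continuous_of_discreteTopology (f := fun d : Fin 3 => ((d:ℕ):ℝ))).comp
      (continuous_apply k)).mul continuous_const
  · have h1 := coor_term_le x k
    have h2 := coor_term_nonneg x k
    rw [Real.norm_eq_abs, abs_of_nonneg h2]; exact h1
/-! ### The fixed point of F -/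

noncomputable def aa : ℝ := (3 - Real.sqrt 5) / 2

lemma sqrt5_sq : Real.sqrt 5 ^ 2 = 5 := Real.sq_sqrt (by norm_num)

lemma sqrt5_gt : 2 < Real.sqrt 5 := by
  nlinarith [sqrt5_sq, Real.sqrt_nonneg 5]

lemma sqrt5_lt : Real.sqrt 5 < 3 := by
  nlinarith [sqrt5_sq, Real.sqrt_nonneg 5]

lemma aa_pos : 0 < aa := by rw [aa]; linarith [sqrt5_lt]

lemma aa_lt_half : aa < 1/2 := by rw [aa]; linarith [sqrt5_gt]

/-! ### Two-sided coding coordinates -/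

/-- The shift on two-sided sequences. -/
def Sh (s : ℤ → Fin 3) : ℤ → Fin 3 := fun k => s (k+1)

lemma Sh_surjective : Function.Surjective Sh := by
  intro s
  refine ⟨fun k => s (k-1), funext fun k => ?_⟩
  simp [Sh]

noncomputable def xc (s : ℤ → Fin 3) : ℝ := coor (fun k : ℕ => s (k+1))

noncomputable def yc (s : ℤ → Fin 3) : ℝ := coor (fun k : ℕ => s (-k))

lemma xc_nonneg (s) : 0 ≤ xc s := coor_nonneg _
lemma xc_le (s) : xc s ≤ 2/3 := coor_le _
lemma yc_nonneg (s) : 0 ≤ yc s := coor_nonneg _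
lemma yc_le (s) : yc s ≤ 2/3 := coor_le _

lemma xc_shift (s : ℤ → Fin 3) : xc s = ((s 1 : ℕ) : ℝ)/4 + xc (Sh s)/4 := by
  have h := coor_cons (fun k : ℕ => s (k+1))
  rw [xc, h]
  have e1 : (fun k : ℕ => s (((k+1:ℕ):ℤ)+1)) = (fun k : ℕ => Sh s ((k:ℤ)+1)) := by
    funext k
    have : (((k+1:ℕ):ℤ))+1 = ((k:ℤ)+1)+1 := by push_cast; ring
    rw [Sh, this]
  rw [e1]
  norm_num [xc]

lemma yc_shift (s : ℤ → Fin 3) : yc (Sh s) = (((s 1 : ℕ) : ℝ) + yc s)/4 := by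
  have h := coor_cons (fun k : ℕ => Sh s (-k))
  rw [yc, h]
  have e0 : Sh s (-((0:ℕ):ℤ)) = s 1 := by
    simp [Sh]
  have e1 : (fun k : ℕ => Sh s (-((k+1:ℕ):ℤ))) = (fun k : ℕ => s (-(k:ℤ))) := by
    funext k
    have : (-((k+1:ℕ):ℤ)) + 1 = -(k:ℤ) := by push_cast; ring
    rw [Sh, this]
  rw [e0, e1]
  norm_num [yc]
  ring

/-! ### clamps and the digit function -/

noncomputable def clamp01 (t : ℝ) : ℝ := max 0 (min 1 t)

lemma clamp01_nonneg (t : ℝ) : 0 ≤ clamp01 t := le_max_left _ _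
lemma clamp01_le_one (t : ℝ) : clamp01 t ≤ 1 := max_le (by norm_num) (min_le_left _ _)
lemma clamp01_of_nonpos {t : ℝ} (h : t ≤ 0) : clamp01 t = 0 :=
  max_eq_left (le_trans (min_le_right _ _) h)
lemma clamp01_of_one_le {t : ℝ} (h : 1 ≤ t) : clamp01 t = 1 := by
  rw [clamp01, min_eq_left h]; exact max_eq_right (by norm_num)
lemma clamp01_continuous : Continuous clamp01 :=
  continuous_const.max (continuous_const.min continuous_id)

noncomputable def dig (u : ℝ) : ℝ := clamp01 (12*(u - 1/6)) + clamp01 (12*(u - 5/12))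

lemma dig_continuous : Continuous dig :=
  (clamp01_continuous.comp (by continuity)).add (clamp01_continuous.comp (by continuity))

lemma dig_eq_of (d : ℕ) (hd : d < 3) (u : ℝ) (h1 : (d:ℝ)/4 ≤ u) (h2 : u ≤ (d:ℝ)/4 + 1/6) :
    dig u = d := by
  interval_cases d
  · rw [dig, clamp01_of_nonpos (by norm_num at h2 ⊢; linarith),
      clamp01_of_nonpos (by norm_num at h2 ⊢; linarith)]
    norm_num
  · rw [dig, clamp01_of_one_le (by norm_num at h1 ⊢; linarith),
      clamp01_of_nonpos (by norm_num at h2 ⊢; linarith)]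
    norm_num
  · rw [dig, clamp01_of_one_le (by norm_num at h1 ⊢; linarith),
      clamp01_of_one_le (by norm_num at h1 ⊢; linarith)]
    norm_num

lemma dig_xc (s : ℤ → Fin 3) : dig (xc s) = ((s 1 : ℕ) : ℝ) := by
  have h := xc_shift s
  have h0 := xc_nonneg (Sh s)
  have h1 := xc_le (Sh s)
  exact dig_eq_of (s 1 : ℕ) (s 1).isLt (xc s) (by linarith) (by linarith)

noncomputable def cl23 (t : ℝ) : ℝ := max 0 (min (2/3) t)

lemma cl23_nonneg (t : ℝ) : 0 ≤ cl23 t := le_max_left _ _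
lemma cl23_le (t : ℝ) : cl23 t ≤ 2/3 := max_le (by norm_num) (min_le_left _ _)
lemma cl23_of_mem {t : ℝ} (h0 : 0 ≤ t) (h1 : t ≤ 2/3) : cl23 t = t := by
  rw [cl23, min_eq_right h1]; exact max_eq_right h0
lemma cl23_continuous : Continuous cl23 :=
  continuous_const.max (continuous_const.min continuous_id)

/-! ### The baker-type map T and the embedding psi -/

noncomputable def T (δ : ℝ) (p : ℝ × ℝ) : ℝ × ℝ :=
  (aa + δ * cl23 (4*((p.1 - aa)/δ) - dig ((p.1 - aa)/δ)),
   aa + δ * cl23 ((((p.2 - aa)/δ) + dig ((p.1 - aa)/δ))/4))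

noncomputable def psi (δ : ℝ) (s : ℤ → Fin 3) : ℝ × ℝ := (aa + δ * xc s, aa + δ * yc s)

lemma T_cont {δ : ℝ} (hδ : δ ≠ 0) : Continuous (T δ) := by
  apply Continuous.prodMk
  · exact continuous_const.add (continuous_const.mul (cl23_continuous.comp (by
      exact ((continuous_const.mul ((continuous_fst.sub continuous_const).div_const δ)).sub
        (dig_continuous.comp ((continuous_fst.sub continuous_const).div_const δ))))))
  · exact continuous_const.add (continuous_const.mul (cl23_continuous.comp (by
      exact (((continuous_snd.sub continuous_const).div_const δ).add
        (dig_continuous.comp ((continuous_fst.sub continuous_const).div_const δ))).div_const 4)))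

lemma T_fst_mem (δ : ℝ) (hδ : 0 ≤ δ) (p : ℝ × ℝ) :
    aa ≤ (T δ p).1 ∧ (T δ p).1 ≤ aa + δ * (2/3) := by
  constructor
  · have := cl23_nonneg (4*((p.1 - aa)/δ) - dig ((p.1 - aa)/δ)); rw [T]; dsimp only; nlinarith
  · have := cl23_le (4*((p.1 - aa)/δ) - dig ((p.1 - aa)/δ)); rw [T]; dsimp only; nlinarith

lemma T_snd_mem (δ : ℝ) (hδ : 0 ≤ δ) (p : ℝ × ℝ) :
    aa ≤ (T δ p).2 ∧ (T δ p).2 ≤ aa + δ * (2/3) := by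
  constructor
  · have := cl23_nonneg ((((p.2 - aa)/δ) + dig ((p.1 - aa)/δ))/4); rw [T]; dsimp only; nlinarith
  · have := cl23_le ((((p.2 - aa)/δ) + dig ((p.1 - aa)/δ))/4); rw [T]; dsimp only; nlinarith

lemma T_psi {δ : ℝ} (hδ : δ ≠ 0) (s : ℤ → Fin 3) : T δ (psi δ s) = psi δ (Sh s) := by
  have hu : ((psi δ s).1 - aa)/δ = xc s := by
    rw [psi]; field_simp; ring
  have hv : ((psi δ s).2 - aa)/δ = yc s := by
    rw [psi]; field_simp; ring
  rw [T, hu, hv, dig_xc, psi]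
  have hx : 4 * xc s - ((s 1 : ℕ) : ℝ) = xc (Sh s) := by
    have := xc_shift s; linarith
  have hy : (yc s + ((s 1 : ℕ) : ℝ))/4 = yc (Sh s) := by
    have := yc_shift s; linarith
  rw [hx, hy, cl23_of_mem (xc_nonneg _) (xc_le _), cl23_of_mem (yc_nonneg _) (yc_le _)]

lemma psi_injective {δ : ℝ} (hδ : δ ≠ 0) : Function.Injective (psi δ) := by
  intro s t h
  rw [psi, psi, Prod.mk.injEq] at h
  have hx : xc s = xc t := by
    exact mul_left_cancel₀ hδ (add_left_cancel h.1)
  have hy : yc s = yc t := by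
    exact mul_left_cancel₀ hδ (add_left_cancel h.2)
  have hxf := congrFun (coor_injective hx)
  have hyf := congrFun (coor_injective hy)
  funext n
  rcases le_or_gt 1 n with hn | hn
  · have := hxf (n-1).toNat
    have h' : (((n-1).toNat : ℤ)) + 1 = n := by omega
    rw [h'] at this; exact this
  · have := hyf (-n).toNat
    have h' : -(((-n).toNat : ℤ)) = n := by omega
    rw [h'] at this; exact this

lemma psi_continuous (δ : ℝ) : Continuous (psi δ) := by
  have hxc : Continuous xc :=
    coor_continuous.comp (continuous_pi fun k => continuous_apply ((k:ℤ)+1))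
  have hyc : Continuous yc :=
    coor_continuous.comp (continuous_pi fun k => continuous_apply (-(k:ℤ)))
  exact (continuous_const.add (continuous_const.mul hxc)).prodMk
    (continuous_const.add (continuous_const.mul hyc))

/-! ### The bump function chi -/

noncomputable def chi (r : ℝ) (p : ℝ × ℝ) : ℝ :=
  clamp01 (2 - 2 * max |p.1 - aa| |p.2 - aa| / r)

lemma chi_nonneg (r p) : 0 ≤ chi r p := clamp01_nonneg _
lemma chi_le_one (r p) : chi r p ≤ 1 := clamp01_le_one _

lemma chi_continuous {r : ℝ} (hr : r ≠ 0) : Continuous (chi r) := by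
  apply clamp01_continuous.comp
  exact continuous_const.sub ((continuous_const.mul
    (((continuous_fst.sub continuous_const).abs).max
      ((continuous_snd.sub continuous_const).abs))).div_const r)

lemma chi_eq_one {r : ℝ} (hr : 0 < r) {p : ℝ × ℝ}
    (h : max |p.1 - aa| |p.2 - aa| ≤ r/2) : chi r p = 1 := by
  apply clamp01_of_one_le
  have h1 : 2 * max |p.1 - aa| |p.2 - aa| / r ≤ 1 := by
    rw [div_le_one hr]; linarith
  linarith

lemma chi_pos_lt {r : ℝ} (hr : 0 < r) {p : ℝ × ℝ} (h : chi r p ≠ 0) :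
    max |p.1 - aa| |p.2 - aa| < r := by
  by_contra hc
  push_neg at hc
  apply h
  apply clamp01_of_nonpos
  rw [sub_nonpos, le_div_iff₀ hr]
  nlinarith

/-! ### The perturbed map G -/

noncomputable def G (r δ : ℝ) (p : ℝ × ℝ) : ℝ × ℝ :=
  ((1 - chi r p) * (F p).1 + chi r p * (T δ p).1,
   (1 - chi r p) * (F p).2 + chi r p * (T δ p).2)

lemma G_eq_F {r δ : ℝ} {p : ℝ × ℝ} (h : chi r p = 0) : G r δ p = F p := by
  rw [G, h]; simp

lemma G_psi {r δ : ℝ} (hr : 0 < r) (hδ : 0 < δ) (hδr : δ ≤ r/2) (s : ℤ → Fin 3) :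
    G r δ (psi δ s) = psi δ (Sh s) := by
  have h1 : chi r (psi δ s) = 1 := by
    apply chi_eq_one hr
    have hx0 := xc_nonneg s; have hx1 := xc_le s
    have hy0 := yc_nonneg s; have hy1 := yc_le s
    have e1 : |(psi δ s).1 - aa| = δ * xc s := by
      rw [psi]; dsimp only; rw [add_sub_cancel_left, abs_of_nonneg (by positivity)]
    have e2 : |(psi δ s).2 - aa| = δ * yc s := by
      rw [psi]; dsimp only; rw [add_sub_cancel_left, abs_of_nonneg (by positivity)]
    rw [e1, e2]
    apply max_le <;> nlinarith
  rw [G, h1, ← T_psi (ne_of_gt hδ) s]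
  simp
/-! ### Properties of F on X -/

lemma memX_iff {p : ℝ × ℝ} : p ∈ X ↔
    (0 ≤ p.1 ∧ p.1 ≤ 1) ∧ (0 ≤ p.2 ∧ p.2 ≤ 1) ∧
    ¬(p.1 = 0 ∧ p.2 = 0) ∧ ¬(p.1 = 1 ∧ p.2 = 1) := by
  rw [X]
  simp only [mem_diff, mem_prod, mem_Icc, mem_insert_iff, mem_singleton_iff, Prod.ext_iff,
    not_or]
  tauto

lemma den_pos {p : ℝ × ℝ} (hp : p ∈ X) : 0 < p.1 + p.2 - p.1 * p.2 := by
  rw [memX_iff] at hp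
  obtain ⟨⟨hx0, hx1⟩, ⟨hy0, hy1⟩, h00, _⟩ := hp
  rcases eq_or_lt_of_le hx0 with h | h
  · have hy : p.2 ≠ 0 := fun hy => h00 ⟨h.symm, hy⟩
    have : 0 < p.2 := lt_of_le_of_ne hy0 (Ne.symm hy)
    nlinarith
  · nlinarith

lemma F_mem {p : ℝ × ℝ} (hp : p ∈ X) : F p ∈ X := by
  have hd := den_pos hp
  rw [memX_iff] at hp
  obtain ⟨⟨hx0, hx1⟩, ⟨hy0, hy1⟩, h00, h11⟩ := hp
  rw [memX_iff, F]
  dsimp only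
  refine ⟨⟨div_nonneg (by nlinarith) hd.le, ?_⟩, ⟨div_nonneg (by nlinarith) hd.le, ?_⟩, ?_, ?_⟩
  · rw [div_le_one hd]; nlinarith
  · rw [div_le_one hd]; nlinarith
  · rintro ⟨h1, h2⟩
    rw [div_eq_zero_iff] at h1 h2
    rcases h1 with h1 | h1
    · rcases h2 with h2 | h2
      · rcases mul_eq_zero.mp h1 with ha | ha <;> rcases mul_eq_zero.mp h2 with hb | hb
        · exact h00 ⟨hb, ha⟩
        · linarith
        · linarith
        · exact h11 ⟨by linarith, by linarith⟩
      · linarith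
    · linarith
  · rintro ⟨h1, h2⟩
    rw [div_eq_one_iff_eq hd.ne'] at h1 h2
    exact h00 ⟨by nlinarith, by nlinarith⟩

lemma F_contOn : ContinuousOn F X := by
  unfold F
  apply ContinuousOn.prodMk
  · exact ContinuousOn.div (by fun_prop) (by fun_prop) (fun p hp => (den_pos hp).ne')
  · exact ContinuousOn.div (by fun_prop) (by fun_prop) (fun p hp => (den_pos hp).ne')

lemma aa_quad : aa^2 - 3*aa + 1 = 0 := by
  rw [aa]; nlinarith [sqrt5_sq]

lemma F_fix : F (aa, aa) = (aa, aa) := by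
  have hd : 0 < aa + aa - aa * aa := by nlinarith [aa_pos, aa_lt_half]
  rw [F, Prod.ext_iff]
  dsimp only
  constructor <;> · rw [div_eq_iff hd.ne']; nlinarith [aa_quad]

lemma F_contAt : ContinuousAt F (aa, aa) := by
  have hd : ((aa, aa) : ℝ × ℝ).1 + ((aa, aa) : ℝ × ℝ).2 - ((aa, aa) : ℝ × ℝ).1 * ((aa, aa) : ℝ × ℝ).2 ≠ 0 := by
    dsimp only; nlinarith [aa_pos, aa_lt_half]
  apply ContinuousAt.prodMk
  · exact ContinuousAt.div (by fun_prop) (by fun_prop) hd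
  · exact ContinuousAt.div (by fun_prop) (by fun_prop) hd

lemma enorm_lt_of {w : ℝ × ℝ} {ε : ℝ} (hε : 0 < ε) (h1 : |w.1| ≤ ε/4) (h2 : |w.2| ≤ ε/4) :
    _root_.enorm w < ε := by
  rw [_root_.enorm]
  have h : w.1^2 + w.2^2 < ε^2 := by
    nlinarith [sq_abs w.1, sq_abs w.2, abs_nonneg w.1, abs_nonneg w.2]
  calc Real.sqrt (w.1^2 + w.2^2) < Real.sqrt (ε^2) := Real.sqrt_lt_sqrt (by positivity) h
    _ = ε := Real.sqrt_sq hε.le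

lemma G_fst (r δ : ℝ) (p : ℝ × ℝ) :
    (G r δ p).1 = (1 - chi r p) * (F p).1 + chi r p * (T δ p).1 := rfl

lemma G_snd (r δ : ℝ) (p : ℝ × ℝ) :
    (G r δ p).2 = (1 - chi r p) * (F p).2 + chi r p * (T δ p).2 := rfl
set_option maxHeartbeats 1000000 in
/-- For every ε > 0 there is a continuous map G : X → X, ε-close to F in the C⁰
(Euclidean sup) sense, together with a nonempty compact invariant set Λ ⊂ (0,1)²
on which G is topologically conjugate to the full two-sided shift on three symbols. -/
theorem horseshoe_chaos :
    ∀ ε : ℝ, 0 < ε →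
      ∃ G : ℝ × ℝ → ℝ × ℝ,
        ContinuousOn G X ∧ MapsTo G X X ∧
        (∀ p ∈ X, _root_.enorm (G p - F p) < ε) ∧
        ∃ Λ : Set (ℝ × ℝ),
          Λ.Nonempty ∧ IsCompact Λ ∧ Λ ⊆ Ioo (0:ℝ) 1 ×ˢ Ioo (0:ℝ) 1 ∧
          G '' Λ = Λ ∧
          ∃ (hm : MapsTo G Λ Λ) (e : Λ ≃ₜ (ℤ → Fin 3)),
            ∀ p : Λ, e (MapsTo.restrict G Λ Λ hm p) = fun k => e p (k + 1) := by
  intro ε hε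
  -- choose the radius r from continuity of F at the fixed point (aa, aa)
  have hFa : ContinuousAt F (aa, aa) := F_contAt
  rw [Metric.continuousAt_iff] at hFa
  obtain ⟨r', hr', hball⟩ := hFa (ε/8) (by positivity)
  set r := r'/2 with hrdef
  have hr : 0 < r := by positivity
  have Hr : ∀ p : ℝ × ℝ, max |p.1 - aa| |p.2 - aa| < r →
      |(F p).1 - aa| ≤ ε/8 ∧ |(F p).2 - aa| ≤ ε/8 := by
    intro p hp
    have hd : dist p ((aa, aa) : ℝ × ℝ) < r' := by
      rw [Prod.dist_eq]
      simp only [Real.dist_eq]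
      calc max |p.1 - aa| |p.2 - aa| < r := hp
        _ < r' := by rw [hrdef]; linarith
    have hb := hball hd
    rw [F_fix, Prod.dist_eq] at hb
    simp only [Real.dist_eq] at hb
    constructor
    · have := lt_of_le_of_lt (le_max_left (|(F p).1 - aa|) (|(F p).2 - aa|)) hb; linarith
    · have := lt_of_le_of_lt (le_max_right (|(F p).1 - aa|) (|(F p).2 - aa|)) hb; linarith
  -- choose the scale δ
  set δ := min (r/2) (min (1/2) (ε/8)) with hδdef
  have hδ : 0 < δ := lt_min (by positivity) (lt_min (by norm_num) (by positivity))
  have hδr : δ ≤ r/2 := min_le_left _ _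
  have hδhalf : δ ≤ 1/2 := le_trans (min_le_right _ _) (min_le_left _ _)
  have hδε : δ ≤ ε/8 := le_trans (min_le_right _ _) (min_le_right _ _)
  have haa1 : aa + δ * (2/3) < 1 := by nlinarith [aa_lt_half]
  refine ⟨G r δ, ?_, ?_, ?_, ?_⟩
  · -- continuity of G on X
    have hchi := chi_continuous hr.ne'
    have hT := T_cont hδ.ne'
    have hF := F_contOn
    unfold G
    apply ContinuousOn.prodMk
    · exact (((continuous_const.sub hchi).continuousOn).mul
        (continuous_fst.comp_continuousOn hF)).add
        ((hchi.continuousOn).mul ((continuous_fst.comp hT).continuousOn))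
    · exact (((continuous_const.sub hchi).continuousOn).mul
        (continuous_snd.comp_continuousOn hF)).add
        ((hchi.continuousOn).mul ((continuous_snd.comp hT).continuousOn))
  · -- G maps X to X
    intro p hp
    have hFm := F_mem hp
    have hc0 := chi_nonneg r p
    have hc1 := chi_le_one r p
    have hT1 := T_fst_mem δ hδ.le p
    have hT2 := T_snd_mem δ hδ.le p
    have haa0 := aa_pos
    rw [memX_iff] at hFm ⊢
    obtain ⟨⟨hf10, hf11⟩, ⟨hf20, hf21⟩, hne00, hne11⟩ := hFm
    rw [G_fst, G_snd]
    refine ⟨⟨by nlinarith, by nlinarith⟩, ⟨by nlinarith, by nlinarith⟩, ?_, ?_⟩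
    · rintro ⟨h1, h2⟩
      rcases eq_or_lt_of_le hc0 with hc | hc
      · rw [← hc] at h1 h2
        simp only [sub_zero, one_mul, zero_mul, add_zero] at h1 h2
        exact hne00 ⟨h1, h2⟩
      · have k1 : 0 ≤ (1 - chi r p) * (F p).1 := mul_nonneg (by linarith) hf10
        have k2 : chi r p * aa ≤ chi r p * (T δ p).1 := by nlinarith [hT1.1]
        nlinarith [mul_pos hc haa0]
    · rintro ⟨h1, h2⟩
      rcases eq_or_lt_of_le hc0 with hc | hc
      · rw [← hc] at h1 h2
        simp only [sub_zero, one_mul, zero_mul, add_zero] at h1 h2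
        exact hne11 ⟨h1, h2⟩
      · have k1 : (1 - chi r p) * (F p).1 ≤ (1 - chi r p) * 1 := by nlinarith
        have k2 : chi r p * (T δ p).1 ≤ chi r p * (aa + δ*(2/3)) := by nlinarith [hT1.2]
        have k3 : chi r p * (aa + δ*(2/3)) < chi r p * 1 := by nlinarith
        nlinarith
  · -- closeness to F
    intro p hp
    have hc0 := chi_nonneg r p
    have hc1 := chi_le_one r p
    have e1 : (G r δ p - F p).1 = chi r p * ((T δ p).1 - (F p).1) := by
      rw [Prod.fst_sub, G_fst]; ring
    have e2 : (G r δ p - F p).2 = chi r p * ((T δ p).2 - (F p).2) := by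
      rw [Prod.snd_sub, G_snd]; ring
    apply enorm_lt_of hε
    all_goals rcases eq_or_ne (chi r p) 0 with hc | hc
    · rw [e1, hc, zero_mul, abs_zero]; positivity
    · have hmax := chi_pos_lt hr hc
      have hF := Hr p hmax
      have hT1 := T_fst_mem δ hδ.le p
      have hTb : |(T δ p).1 - aa| ≤ ε/8 := by
        rw [abs_of_nonneg (by linarith [hT1.1])]; linarith [hT1.2]
      have habs := abs_sub_le (T δ p).1 aa (F p).1
      rw [abs_sub_comm aa (F p).1] at habs
      rw [e1, abs_mul, abs_of_nonneg hc0]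
      nlinarith [abs_nonneg ((T δ p).1 - (F p).1), hF.1,
        mul_nonneg (sub_nonneg.mpr hc1) (abs_nonneg ((T δ p).1 - (F p).1))]
    · rw [e2, hc, zero_mul, abs_zero]; positivity
    · have hmax := chi_pos_lt hr hc
      have hF := Hr p hmax
      have hT2 := T_snd_mem δ hδ.le p
      have hTb : |(T δ p).2 - aa| ≤ ε/8 := by
        rw [abs_of_nonneg (by linarith [hT2.1])]; linarith [hT2.2]
      have habs := abs_sub_le (T δ p).2 aa (F p).2
      rw [abs_sub_comm aa (F p).2] at habs
      rw [e2, abs_mul, abs_of_nonneg hc0]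
      nlinarith [abs_nonneg ((T δ p).2 - (F p).2), hF.2,
        mul_nonneg (sub_nonneg.mpr hc1) (abs_nonneg ((T δ p).2 - (F p).2))]
  -- the invariant Cantor set
  · refine ⟨range (psi δ), ⟨psi δ (fun _ => 0), mem_range_self _⟩,
      isCompact_range (psi_continuous δ), ?_, ?_, ?_⟩
    · -- contained in the open square
      rintro _ ⟨s, rfl⟩
      have hx0 := xc_nonneg s; have hx1 := xc_le s
      have hy0 := yc_nonneg s; have hy1 := yc_le s
      have haa0 := aa_pos
      have p1 : (psi δ s).1 = aa + δ * xc s := rfl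
      have p2 : (psi δ s).2 = aa + δ * yc s := rfl
      rw [mem_prod, mem_Ioo, mem_Ioo, p1, p2]
      refine ⟨⟨?_, ?_⟩, ?_, ?_⟩ <;> nlinarith
    · -- invariance
      have hcomp : (G r δ) ∘ (psi δ) = (psi δ) ∘ Sh := funext fun s => G_psi hr hδ hδr s
      calc G r δ '' range (psi δ) = range ((G r δ) ∘ (psi δ)) := (range_comp _ _).symm
        _ = range ((psi δ) ∘ Sh) := by rw [hcomp]
        _ = range (psi δ) := Sh_surjective.range_comp _
    · -- conjugacy
      have hinj := psi_injective hδ.ne'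
      have hemb := (psi_continuous δ).isClosedEmbedding hinj
      set E := hemb.toIsEmbedding.toHomeomorph with hE
      have hEval : ∀ s, ((E s : ℝ × ℝ)) = psi δ s := fun s => rfl
      have hm : MapsTo (G r δ) (range (psi δ)) (range (psi δ)) := by
        rintro _ ⟨s, rfl⟩
        rw [G_psi hr hδ hδr s]
        exact mem_range_self _
      refine ⟨hm, E.symm, fun p => ?_⟩
      show E.symm (hm.restrict _ _ _ p) = Sh (E.symm p)
      have hval : psi δ (E.symm p) = (p : ℝ × ℝ) := by
        rw [← hEval (E.symm p), E.apply_symm_apply]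
      have key : hm.restrict _ _ _ p = E (Sh (E.symm p)) := by
        apply Subtype.ext
        rw [hEval]
        show G r δ (p : ℝ × ℝ) = psi δ (Sh (E.symm p))
        rw [← G_psi hr hδ hδr (E.symm p), hval]
      rw [key, Homeomorph.symm_apply_apply]
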